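/- Let C be a class of finite graphs. Then C is winning for splitter if and only if C is limit winning for splitter. -/

import Mathlib

namespace NWD

open SimpleGraph Filter

/-! ### Shallow minors -/

/-- A `d`-shallow minor model of `H` in `G`: a family of pairwise disjoint branch sets,
each connected of radius at most `d` (witnessed by a center joined to every vertex of the
branch set by a walk of length at most `d` inside the branch set), such that every edge of `H`
is realized by an edge of `G` between the corresponding branch sets. -/
def IsShallowMinorModel {V W : Type} (G : SimpleGraph V) (H : SimpleGraph W) (d : ℕ)
    (α : W → G.Subgraph) : Prop :=
  (∀ w : W, ∃ c : (α w).verts, ∀ x : (α w).verts, ∃ p : (α w).coe.Walk c x, p.length ≤ d) ∧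
  (∀ w w' : W, w ≠ w' → Disjoint (α w).verts (α w').verts) ∧
  (∀ w w' : W, H.Adj w w' → ∃ x ∈ (α w).verts, ∃ y ∈ (α w').verts, G.Adj x y)

/-- `H` is a shallow minor of `G` at depth `d`. -/
def IsShallowMinor {V W : Type} (G : SimpleGraph V) (H : SimpleGraph W) (d : ℕ) : Prop :=
  ∃ α : W → G.Subgraph, IsShallowMinorModel G H d α

/-! ### Topological shallow minors -/

/-- A `d`-shallow topological minor model of `H` in `G`: an injective map `f` on vertices
together with, for every edge `uv` of `H`, a path of length at most `2d+1` in `G` from `f u`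
to `f v`; the paths are pairwise vertex-disjoint apart from possibly sharing endpoints. -/
def IsTopMinorModel {V W : Type} (G : SimpleGraph V) (H : SimpleGraph W) (d : ℕ)
    (f : W → V) (P : ∀ ⦃u v : W⦄, H.Adj u v → G.Walk (f u) (f v)) : Prop :=
  Function.Injective f ∧
  (∀ ⦃u v : W⦄ (h : H.Adj u v), (P h).IsPath) ∧
  (∀ ⦃u v : W⦄ (h : H.Adj u v), (P h).length ≤ 2 * d + 1) ∧
  (∀ ⦃u v : W⦄ (h : H.Adj u v), P h.symm = (P h).reverse) ∧
  (∀ ⦃u v u' v' : W⦄ (h : H.Adj u v) (h' : H.Adj u' v'), s(u, v) ≠ s(u', v') →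
    ∀ x : V, x ∈ (P h).support → x ∈ (P h').support →
      (x = f u ∨ x = f v) ∧ (x = f u' ∨ x = f v'))

/-- `H` is a topological shallow minor of `G` at depth `d`. -/
def IsTopShallowMinor {V W : Type} (G : SimpleGraph V) (H : SimpleGraph W) (d : ℕ) : Prop :=
  ∃ (f : W → V) (P : ∀ ⦃u v : W⦄, H.Adj u v → G.Walk (f u) (f v)),
    IsTopMinorModel G H d f P

/-! ### Ultraproducts of graphs -/

/-- The setoid identifying sequences agreeing on a set of the ultrafilter. -/
def prodSetoid (U : Ultrafilter ℕ) (Vs : ℕ → Type) : Setoid (∀ n, Vs n) where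
  r g h := ∀ᶠ n in (U : Filter ℕ), g n = h n
  iseqv := by
    constructor
    · intro g; exact Eventually.of_forall fun n => rfl
    · intro g h hg; exact hg.mono fun n hn => hn.symm
    · intro g h k h1 h2; filter_upwards [h1, h2] with n e1 e2; rw [e1, e2]

/-- The vertex set of the ultraproduct. -/
def UVertex (U : Ultrafilter ℕ) (Vs : ℕ → Type) : Type := Quotient (prodSetoid U Vs)

/-- The ultraproduct of a sequence of graphs along the ultrafilter `U`. -/
def UGraph (U : Ultrafilter ℕ) {Vs : ℕ → Type} (Gs : ∀ n, SimpleGraph (Vs n)) :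
    SimpleGraph (UVertex U Vs) where
  Adj x y := Quotient.liftOn₂ x y
    (fun g h => ∀ᶠ n in (U : Filter ℕ), (Gs n).Adj (g n) (h n))
    (by
      intro a b a' b' ha hb
      apply propext
      constructor
      · intro hadj; filter_upwards [hadj, ha, hb] with n h1 h2 h3; rw [← h2, ← h3]; exact h1
      · intro hadj; filter_upwards [hadj, ha, hb] with n h1 h2 h3; rw [h2, h3]; exact h1)
  symm := by
    constructor
    intro x y
    refine Quotient.inductionOn₂ x y ?_
    intro g h hadj
    exact hadj.mono fun n hn => hn.symm
  loopless := by
    constructor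
    intro x
    refine Quotient.inductionOn x ?_
    intro g hadj
    obtain ⟨n, hn⟩ := hadj.exists
    exact (Gs n).loopless.irrefl _ hn

/-! ### Graph classes and class limits -/

/-- A class of graphs: a predicate on graphs over arbitrary vertex types. -/
def GraphClass : Type 1 := ∀ V : Type, SimpleGraph V → Prop

/-- `C` is a class of finite graphs. -/
def FiniteClass (C : GraphClass) : Prop :=
  ∀ (V : Type) (G : SimpleGraph V), C V G → Finite V

/-- `H` is (isomorphic to) a subgraph of `G`. -/
def IsSubgraphOf {W V : Type} (H : SimpleGraph W) (G : SimpleGraph V) : Prop :=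
  ∃ f : W → V, Function.Injective f ∧ ∀ ⦃u v : W⦄, H.Adj u v → G.Adj (f u) (f v)

/-- Membership in the class limit `C*`: subgraphs of ultraproducts of sequences from `C`. -/
def InLimit (U : Ultrafilter ℕ) (C : GraphClass) {W : Type} (H : SimpleGraph W) : Prop :=
  ∃ (Vs : ℕ → Type) (Gs : ∀ n, SimpleGraph (Vs n)),
    (∀ n, C (Vs n) (Gs n)) ∧ IsSubgraphOf H (UGraph U Gs)

/-- `H ∈ C ▽ d`. -/
def InClassMinor (C : GraphClass) (d : ℕ) {W : Type} (H : SimpleGraph W) : Prop :=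
  ∃ (V : Type) (G : SimpleGraph V), C V G ∧ IsShallowMinor G H d

/-- `H ∈ C ∇̃ d`. -/
def InClassTopMinor (C : GraphClass) (d : ℕ) {W : Type} (H : SimpleGraph W) : Prop :=
  ∃ (V : Type) (G : SimpleGraph V), C V G ∧ IsTopShallowMinor G H d

/-- `H ∈ C* ▽ d`. -/
def InLimitMinor (U : Ultrafilter ℕ) (C : GraphClass) (d : ℕ) {W : Type}
    (H : SimpleGraph W) : Prop :=
  ∃ (V : Type) (G : SimpleGraph V), InLimit U C G ∧ IsShallowMinor G H d

/-- `H ∈ C* ∇̃ d`. -/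
def InLimitTopMinor (U : Ultrafilter ℕ) (C : GraphClass) (d : ℕ) {W : Type}
    (H : SimpleGraph W) : Prop :=
  ∃ (V : Type) (G : SimpleGraph V), InLimit U C G ∧ IsTopShallowMinor G H d

/-- `C` is somewhere dense: all finite graphs are shallow minors at some fixed depth. -/
def SomewhereDense (C : GraphClass) : Prop :=
  ∃ d : ℕ, ∀ (W : Type) (H : SimpleGraph W), Finite W → InClassMinor C d H

/-- `C` is topologically somewhere dense. -/
def TopSomewhereDense (C : GraphClass) : Prop :=
  ∃ d : ℕ, ∀ (W : Type) (H : SimpleGraph W), Finite W → InClassTopMinor C d H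

/-- The countably infinite clique `K_ω`. -/
def Komega : SimpleGraph ℕ := ⊤

/-- The clique on continuum many vertices `K_𝔠`. -/
def Kcontinuum : SimpleGraph (Set ℕ) := ⊤

/-- `C` is hereditary: closed under induced subgraphs. -/
def Hereditary (C : GraphClass) : Prop :=
  ∀ (V : Type) (G : SimpleGraph V), C V G →
    ∀ (W : Type) (f : W → V), Function.Injective f → C W (G.comap f)

/-! ### Scattered sets and quasi-wideness -/

/-- `X` is a `d`-scattered set of `G - S`: it avoids `S`, and any two distinct vertices of `X`
are at distance greater than `2d` in `G - S` (every connecting walk avoiding `S` is longer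
than `2d`). -/
def ScatteredIn {V : Type} (G : SimpleGraph V) (d : ℕ) (S X : Set V) : Prop :=
  Disjoint X S ∧ ∀ u ∈ X, ∀ v ∈ X, u ≠ v →
    ∀ p : G.Walk u v, (∀ x ∈ p.support, x ∉ S) → 2 * d < p.length

/-- `C` is quasi-wide with margin `s`. -/
def QuasiWide (C : GraphClass) (s : ℕ → ℕ) : Prop :=
  ∀ d m : ℕ, ∃ N : ℕ, ∀ (V : Type) (G : SimpleGraph V), C V G → N ≤ Nat.card V →
    ∃ S X : Set V, S.Finite ∧ S.ncard ≤ s d ∧ X.Finite ∧ X.ncard = m ∧ ScatteredIn G d S X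

/-- `C` is uniformly quasi-wide with margin `s`. -/
def UniformlyQuasiWide (C : GraphClass) (s : ℕ → ℕ) : Prop :=
  ∀ d m : ℕ, ∃ N : ℕ, ∀ (V : Type) (G : SimpleGraph V), C V G →
    ∀ W : Set V, N ≤ W.ncard →
      ∃ S X : Set V, S.Finite ∧ S.ncard ≤ s d ∧ X ⊆ W ∧ X.Finite ∧ X.ncard = m ∧
        ScatteredIn G d S X

/-- `C` is limit quasi-wide. -/
def LimitQW (U : Ultrafilter ℕ) (C : GraphClass) : Prop :=
  ∀ (d : ℕ) (V : Type) (G : SimpleGraph V), InLimit U C G → Infinite V →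
    ∃ S X : Set V, S.Finite ∧ X.Infinite ∧ ScatteredIn G d S X

/-- `C` is uniformly limit quasi-wide. -/
def UniformLimitQW (U : Ultrafilter ℕ) (C : GraphClass) : Prop :=
  ∀ (d : ℕ) (V : Type) (G : SimpleGraph V), InLimit U C G →
    ∀ W : Set V, W.Infinite →
      ∃ S X : Set V, S.Finite ∧ X ⊆ W ∧ X.Infinite ∧ ScatteredIn G d S X

/-- `C` is strongly limit quasi-wide with margin `s`. -/
def StrongLimitQW (U : Ultrafilter ℕ) (C : GraphClass) (s : ℕ → ℕ) : Prop :=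
  ∀ (d : ℕ) (V : Type) (G : SimpleGraph V), InLimit U C G → Infinite V →
    ∃ S X : Set V, S.Finite ∧ S.ncard ≤ s d ∧ X.Infinite ∧ ScatteredIn G d S X

/-- `C` is strongly uniformly limit quasi-wide with margin `s`. -/
def StrongUniformLimitQW (U : Ultrafilter ℕ) (C : GraphClass) (s : ℕ → ℕ) : Prop :=
  ∀ (d : ℕ) (V : Type) (G : SimpleGraph V), InLimit U C G →
    ∀ W : Set V, W.Infinite →
      ∃ S X : Set V, S.Finite ∧ S.ncard ≤ s d ∧ X ⊆ W ∧ X.Infinite ∧ ScatteredIn G d S X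

/-! ### The splitter game -/

/-- One round of the splitter game: from arena `A`, connector picks `v`, splitter picks `W`;
the new arena consists of the vertices of `A` outside `W` at distance at most `d` from `v`
in the subgraph induced by `A`. -/
def arenaStep {V : Type} (G : SimpleGraph V) (d : ℕ) (A : Set V) (v : V) (W : Set V) : Set V :=
  {x | x ∈ A ∧ x ∉ W ∧ ∃ p : G.Walk v x, p.length ≤ d ∧ ∀ y ∈ p.support, y ∈ A}

/-- The arena after a (chronological) history of moves. -/
def arenaAfter {V : Type} (G : SimpleGraph V) (d : ℕ) (hist : List (V × Set V)) : Set V :=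
  hist.foldl (fun A mv => arenaStep G d A mv.1 mv.2) Set.univ

/-- A strategy for splitter: given the history and connector's new move, produce a set. -/
def SplitterStrategy (V : Type) : Type := List (V × Set V) → V → Set V

/-- The history of the play where connector plays `c` and splitter follows `σ`. -/
def splitterHist {V : Type} (σ : SplitterStrategy V) (c : ℕ → V) : ℕ → List (V × Set V)
  | 0 => []
  | n + 1 => splitterHist σ c n ++ [(c n, σ (splitterHist σ c n) (c n))]

/-- Connector's first `n` moves are valid (inside the successive arenas). -/
def ConsistentPlay {V : Type} (G : SimpleGraph V) (d : ℕ) (σ : SplitterStrategy V)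
    (c : ℕ → V) (n : ℕ) : Prop :=
  ∀ k < n, c k ∈ arenaAfter G d (splitterHist σ c k)

/-- `σ` is a winning strategy for splitter in the limit `d`-splitter game on `G`:
its moves are valid (finite subsets of the arena) along any consistent play, and no
infinite sequence of valid connector moves exists. -/
def SplitterWinsLimit {V : Type} (G : SimpleGraph V) (d : ℕ) (σ : SplitterStrategy V) : Prop :=
  (∀ (c : ℕ → V) (n : ℕ), ConsistentPlay G d σ c (n + 1) →
      (σ (splitterHist σ c n) (c n)).Finite ∧
      σ (splitterHist σ c n) (c n) ⊆ arenaAfter G d (splitterHist σ c n)) ∧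
  (∀ c : ℕ → V, ∃ n : ℕ, c n ∉ arenaAfter G d (splitterHist σ c n))

/-- `σ` is a winning strategy for splitter in the `(ℓ, m, d)`-splitter game on `G`. -/
def SplitterWinsGame {V : Type} (G : SimpleGraph V) (l m d : ℕ) (σ : SplitterStrategy V) :
    Prop :=
  (∀ (c : ℕ → V) (n : ℕ), ConsistentPlay G d σ c (n + 1) →
      (σ (splitterHist σ c n) (c n)).Finite ∧
      (σ (splitterHist σ c n) (c n)).ncard ≤ m ∧
      σ (splitterHist σ c n) (c n) ⊆ arenaAfter G d (splitterHist σ c n)) ∧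
  (∀ c : ℕ → V, ∃ n ≤ l, c n ∉ arenaAfter G d (splitterHist σ c n))

/-- A strategy for connector: given the history, produce a vertex. -/
def ConnectorStrategy (V : Type) : Type := List (V × Set V) → V

/-- The history of the play where connector follows `τ` and splitter plays `w`. -/
def connectorHist {V : Type} (τ : ConnectorStrategy V) (w : ℕ → Set V) :
    ℕ → List (V × Set V)
  | 0 => []
  | n + 1 => connectorHist τ w n ++ [(τ (connectorHist τ w n), w n)]

/-- `τ` is a winning strategy for connector in the limit `d`-splitter game on `G`:
as long as splitter's moves are valid, connector's moves stay in the arena forever. -/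
def ConnectorWinsLimit {V : Type} (G : SimpleGraph V) (d : ℕ) (τ : ConnectorStrategy V) :
    Prop :=
  ∀ (w : ℕ → Set V) (n : ℕ),
    (∀ k < n, (w k).Finite ∧ w k ⊆ arenaAfter G d (connectorHist τ w k)) →
    τ (connectorHist τ w n) ∈ arenaAfter G d (connectorHist τ w n)

/-- `τ` is a winning strategy for connector in the `(ℓ, m, d)`-splitter game on `G`:
the arena stays nonempty for `ℓ` rounds, i.e. connector has valid moves at rounds `0,…,ℓ`. -/
def ConnectorWinsGame {V : Type} (G : SimpleGraph V) (l m d : ℕ) (τ : ConnectorStrategy V) :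
    Prop :=
  ∀ (w : ℕ → Set V) (n : ℕ), n ≤ l →
    (∀ k < n, (w k).Finite ∧ (w k).ncard ≤ m ∧
      w k ⊆ arenaAfter G d (connectorHist τ w k)) →
    τ (connectorHist τ w n) ∈ arenaAfter G d (connectorHist τ w n)

/-- `C` is winning for splitter. -/
def WinningForSplitter (C : GraphClass) : Prop :=
  ∀ d : ℕ, ∃ l m : ℕ, ∀ (V : Type) (G : SimpleGraph V), C V G →
    ∃ σ : SplitterStrategy V, SplitterWinsGame G l m d σ

/-- `C` is limit winning for splitter. -/
def LimitWinningForSplitter (U : Ultrafilter ℕ) (C : GraphClass) : Prop :=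
  ∀ (d : ℕ) (V : Type) (G : SimpleGraph V), InLimit U C G →
    ∃ σ : SplitterStrategy V, SplitterWinsLimit G d σ

/-! ### First-order satisfaction in graphs -/

/-- `G` satisfies the first-order sentence `φ` in the language of graphs. -/
def GSat {V : Type} (G : SimpleGraph V) (φ : FirstOrder.Language.graph.Sentence) : Prop :=
  @FirstOrder.Language.Sentence.Realize FirstOrder.Language.graph V G.structure φ

/-! If every graph of `C` admits an `(ℓ, m, d)`-strategy, splitter plays on a subgraph of an
ultraproduct by running these strategies in every coordinate against the coordinates of
connector's moves and deleting what is deleted in `U`-almost every coordinate. Short walks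
transfer to almost every coordinate, so the limit arena projects into the coordinate arenas;
hence splitter deletes at most `m` vertices per round and the game ends within `ℓ` rounds.

Conversely, if `C` is not winning, finite games are determined, so there are `Gₙ ∈ C` on which
connector survives `n` rounds against `n` deletions per round. On the ultraproduct connector
plays these survival moves coordinatewise: a vertex lying in almost every coordinate arena lies
in the limit arena, and a finite set of splitter projects to at most `n` vertices for almost
every `n`, so connector is never stuck. -/

section Game

variable {V : Type} {G : SimpleGraph V} {d : ℕ}

lemma arenaAfter_append (G : SimpleGraph V) (d : ℕ) (hist : List (V × Set V)) (mv : V × Set V) :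
    arenaAfter G d (hist ++ [mv]) = arenaStep G d (arenaAfter G d hist) mv.1 mv.2 := by
  simp [arenaAfter, List.foldl_append]

lemma arenaStep_inter_self (G : SimpleGraph V) (d : ℕ) (A : Set V) (v : V) (W : Set V) :
    arenaStep G d A v (W ∩ A) = arenaStep G d A v W := by
  ext x
  simp only [arenaStep, Set.mem_ofPred_eq, Set.mem_inter_iff]
  tauto

lemma splitterHist_succ (σ : SplitterStrategy V) (c : ℕ → V) (k : ℕ) :
    splitterHist σ c (k + 1) = splitterHist σ c k ++ [(c k, σ (splitterHist σ c k) (c k))] :=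
  rfl

lemma length_splitterHist (σ : SplitterStrategy V) (c : ℕ → V) (k : ℕ) :
    (splitterHist σ c k).length = k := by
  induction k with
  | zero => rfl
  | succ k ih => simp [splitterHist_succ, ih]

/-- `Survives G m d r A`: starting from the arena `A`, connector has valid moves in each of the
next `r + 1` rounds, whatever sets of at most `m` vertices splitter deletes. -/
def Survives (G : SimpleGraph V) (m d : ℕ) : ℕ → Set V → Prop
  | 0, A => A.Nonempty
  | r + 1, A => ∃ v ∈ A, ∀ W : Set V, W.Finite → W.ncard ≤ m →
      Survives G m d r (arenaStep G d A v W)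

lemma Survives.nonempty {m r : ℕ} {A : Set V} (h : Survives G m d r A) : A.Nonempty := by
  cases r with
  | zero => exact h
  | succ r => obtain ⟨v, hv, -⟩ := h; exact ⟨v, hv⟩

open scoped Classical in
noncomputable def blockingStrategy (G : SimpleGraph V) (l m d : ℕ) : SplitterStrategy V :=
  fun hist v =>
    if hW : ∃ W : Set V, W.Finite ∧ W.ncard ≤ m ∧
        ¬ Survives G m d (l - hist.length - 1) (arenaStep G d (arenaAfter G d hist) v W)
    then hW.choose ∩ arenaAfter G d hist else ∅

lemma blockingStrategy_valid (l m : ℕ) (hist : List (V × Set V)) (v : V) :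
    (blockingStrategy G l m d hist v).Finite ∧ (blockingStrategy G l m d hist v).ncard ≤ m ∧
      blockingStrategy G l m d hist v ⊆ arenaAfter G d hist := by
  rw [blockingStrategy]
  split_ifs with hW
  · obtain ⟨hfin, hcard, -⟩ := hW.choose_spec
    exact ⟨hfin.inter_of_left _, (Set.ncard_inter_le_ncard_left _ _ hfin).trans hcard,
      Set.inter_subset_right⟩
  · simp

lemma not_survives_blockingStrategy {l m : ℕ} {hist : List (V × Set V)} {v : V}
    (hv : v ∈ arenaAfter G d hist) (hl : hist.length < l)
    (h : ¬ Survives G m d (l - hist.length) (arenaAfter G d hist)) :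
    ¬ Survives G m d (l - (hist.length + 1))
      (arenaAfter G d (hist ++ [(v, blockingStrategy G l m d hist v)])) := by
  have hW : ∃ W : Set V, W.Finite ∧ W.ncard ≤ m ∧
      ¬ Survives G m d (l - hist.length - 1) (arenaStep G d (arenaAfter G d hist) v W) := by
    rw [show l - hist.length = l - hist.length - 1 + 1 by omega, Survives] at h
    push Not at h
    exact h v hv
  rw [arenaAfter_append, blockingStrategy, dif_pos hW, arenaStep_inter_self, Nat.sub_add_eq]
  exact hW.choose_spec.2.2

lemma splitterWinsGame_blockingStrategy {l m : ℕ} (h : ¬ Survives G m d l Set.univ) :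
    SplitterWinsGame G l m d (blockingStrategy G l m d) := by
  refine ⟨fun c n _ => blockingStrategy_valid l m _ _, fun c => ?_⟩
  by_contra! hc
  have hlose : ∀ n ≤ l,
      ¬ Survives G m d (l - n) (arenaAfter G d (splitterHist (blockingStrategy G l m d) c n)) := by
    intro n
    induction n with
    | zero => simpa [splitterHist, arenaAfter] using h
    | succ n ih =>
      intro hn
      have := not_survives_blockingStrategy (l := l) (m := m) (hc n (by omega))
        (by rw [length_splitterHist]; omega) (by rw [length_splitterHist]; exact ih (by omega))
      rwa [length_splitterHist] at this
  exact hlose l le_rfl (by simpa using ⟨c l, hc l le_rfl⟩)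

lemma survives_of_forall_not_splitterWinsGame {l m : ℕ}
    (h : ∀ σ : SplitterStrategy V, ¬ SplitterWinsGame G l m d σ) :
    Survives G m d l Set.univ := by
  by_contra hs
  exact h _ (splitterWinsGame_blockingStrategy hs)

def playHist (τ : ConnectorStrategy V) (σ : SplitterStrategy V) : ℕ → List (V × Set V)
  | 0 => []
  | k + 1 =>
    playHist τ σ k ++ [(τ (playHist τ σ k), σ (playHist τ σ k) (τ (playHist τ σ k)))]

lemma splitterHist_playHist (τ : ConnectorStrategy V) (σ : SplitterStrategy V) (k : ℕ) :
    splitterHist σ (fun j => τ (playHist τ σ j)) k = playHist τ σ k := by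
  induction k with
  | zero => rfl
  | succ k ih => rw [splitterHist_succ, ih]; rfl

theorem not_splitterWinsLimit_of_invariant (I : List (V × Set V) → Prop) (h₀ : I [])
    (hstep : ∀ hist, I hist →
      ∃ v ∈ arenaAfter G d hist, ∀ S : Set V, S.Finite → I (hist ++ [(v, S)]))
    (σ : SplitterStrategy V) : ¬ SplitterWinsLimit G d σ := by
  rintro ⟨hvalid, hwin⟩
  obtain ⟨v₀, -⟩ := hstep [] h₀
  have hτ : ∀ hist, ∃ v, I hist →
      v ∈ arenaAfter G d hist ∧ ∀ S : Set V, S.Finite → I (hist ++ [(v, S)]) := by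
    intro hist
    by_cases hI : I hist
    · obtain ⟨v, hv, hS⟩ := hstep hist hI
      exact ⟨v, fun _ => ⟨hv, hS⟩⟩
    · exact ⟨v₀, fun h => absurd h hI⟩
  choose τ hτ using hτ
  set c : ℕ → V := fun j => τ (playHist τ σ j)
  have hhist : ∀ k, splitterHist σ c k = playHist τ σ k := splitterHist_playHist τ σ
  have hplay : ∀ k, I (playHist τ σ k) ∧ ConsistentPlay G d σ c k := by
    intro k
    induction k with
    | zero => exact ⟨h₀, fun j hj => absurd hj (Nat.not_lt_zero j)⟩
    | succ k ih =>
      obtain ⟨hI, hcons⟩ := ih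
      have hcons' : ConsistentPlay G d σ c (k + 1) := by
        intro j hj
        rcases Nat.lt_succ_iff_lt_or_eq.mp hj with hj | rfl
        · exact hcons j hj
        · rw [hhist]; exact (hτ _ hI).1
      have hfin := (hvalid c k hcons').1
      rw [hhist] at hfin
      exact ⟨(hτ _ hI).2 _ hfin, hcons'⟩
  obtain ⟨n, hn⟩ := hwin c
  rw [hhist] at hn
  exact hn (hτ _ (hplay n).1).1

end Game

section Lift

variable {ι V : Type} {Vs : ι → Type} {G : SimpleGraph V} {Gs : ∀ n, SimpleGraph (Vs n)}
  {rep : V → ∀ n, Vs n} {d : ℕ}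

lemma eventually_exists_walk {l : Filter ι}
    (hadj : ∀ ⦃u w : V⦄, G.Adj u w → ∀ᶠ n in l, (Gs n).Adj (rep u n) (rep w n))
    {B : Set V} {A : ∀ n, Set (Vs n)} (hBA : ∀ x ∈ B, ∀ᶠ n in l, rep x n ∈ A n)
    {u w : V} (p : G.Walk u w) (hp : ∀ y ∈ p.support, y ∈ B) :
    ∀ᶠ n in l, ∃ q : (Gs n).Walk (rep u n) (rep w n),
      q.length = p.length ∧ ∀ y ∈ q.support, y ∈ A n := by
  induction p with
  | nil =>
    filter_upwards [hBA _ (hp _ (Walk.start_mem_support _))] with n hn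
    exact ⟨Walk.nil, rfl, by simpa using hn⟩
  | cons h p ih =>
    filter_upwards [hadj h, ih fun y hy => hp y (by simp [hy]),
      hBA _ (hp _ (Walk.start_mem_support _))] with n hn ⟨q, hq, hqA⟩ hu
    refine ⟨Walk.cons hn q, by simp [hq], ?_⟩
    simpa [hu] using hqA

lemma eventually_mem_arenaStep (U : Ultrafilter ι)
    (hadj : ∀ ⦃u w : V⦄, G.Adj u w → ∀ᶠ n in U, (Gs n).Adj (rep u n) (rep w n))
    {B : Set V} {A : ∀ n, Set (Vs n)} (hBA : ∀ x ∈ B, ∀ᶠ n in U, rep x n ∈ A n)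
    {v x : V} {W : ∀ n, Set (Vs n)}
    (hx : x ∈ arenaStep G d B v {y | y ∈ B ∧ ∀ᶠ n in U, rep y n ∈ W n}) :
    ∀ᶠ n in U, rep x n ∈ arenaStep (Gs n) d (A n) (rep v n) (W n) := by
  obtain ⟨hxB, hxW, p, hpd, hpB⟩ := hx
  have hxW' : ∀ᶠ n in U, rep x n ∉ W n :=
    Ultrafilter.eventually_not.mpr fun h => hxW ⟨hxB, h⟩
  filter_upwards [hBA x hxB, hxW', eventually_exists_walk hadj hBA p hpB]
    with n hxA hxW ⟨q, hq, hqA⟩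
  exact ⟨hxA, hxW, q, hq.trans_le hpd, hqA⟩

lemma finite_and_ncard_le_of_eventually {l : Filter ι} [l.NeBot]
    (hinj : Pairwise fun u w => ∀ᶠ n in l, rep u n ≠ rep w n)
    {T : ∀ n, Set (Vs n)} {m : ℕ} (hT : ∀ᶠ n in l, (T n).Finite ∧ (T n).ncard ≤ m)
    {S : Set V} (hS : ∀ y ∈ S, ∀ᶠ n in l, rep y n ∈ T n) :
    S.Finite ∧ S.ncard ≤ m := by
  have hsub : ∀ t ⊆ S, t.Finite → t.ncard ≤ m := by
    intro t hts ht
    have hmem : ∀ᶠ n in l, ∀ y ∈ t, rep y n ∈ T n :=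
      ht.eventually_all.mpr fun y hy => hS y (hts hy)
    have hinjOn : ∀ᶠ n in l, ∀ y ∈ t, ∀ z ∈ t, rep y n = rep z n → y = z := by
      refine ht.eventually_all.mpr fun y _ => ht.eventually_all.mpr fun z _ => ?_
      by_cases hyz : y = z
      · exact Eventually.of_forall fun _ _ => hyz
      · exact (hinj hyz).mono fun n hn he => absurd he hn
    obtain ⟨n, ⟨hTfin, hTm⟩, hmem, hinjOn⟩ := (hT.and (hmem.and hinjOn)).exists
    exact (Set.ncard_le_ncard_of_injOn _ hmem (fun y hy z hz => hinjOn y hy z hz) hTfin).trans hTm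
  have hfin : S.Finite := by
    by_contra hinf
    obtain ⟨t, hts, htc⟩ := Set.Infinite.exists_subset_card_eq hinf (m + 1)
    have := hsub t hts t.finite_toSet
    rw [Set.ncard_coe_finset, htc] at this
    omega
  exact ⟨hfin, hsub S le_rfl hfin⟩

/-- The history in coordinate `n` simulated by splitter: connector plays the `n`-th coordinates
of the actual moves and splitter answers with `σs n`. -/
def coordHist (σs : ∀ n, SplitterStrategy (Vs n)) (rep : V → ∀ n, Vs n) (n : ι)
    (hist : List (V × Set V)) : List (Vs n × Set (Vs n)) :=
  hist.foldl (fun h mv => h ++ [(rep mv.1 n, σs n h (rep mv.1 n))]) []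

def liftStrategy (U : Filter ι) (G : SimpleGraph V) (d : ℕ)
    (σs : ∀ n, SplitterStrategy (Vs n)) (rep : V → ∀ n, Vs n) : SplitterStrategy V :=
  fun hist v => {y | y ∈ arenaAfter G d hist ∧
    ∀ᶠ n in U, rep y n ∈ σs n (coordHist σs rep n hist) (rep v n)}

lemma coordHist_splitterHist (U : Filter ι) (σs : ∀ n, SplitterStrategy (Vs n)) (c : ℕ → V)
    (n : ι) (k : ℕ) :
    coordHist σs rep n (splitterHist (liftStrategy U G d σs rep) c k) =
      splitterHist (σs n) (fun j => rep (c j) n) k := by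
  induction k with
  | zero => rfl
  | succ k ih => simp [splitterHist_succ, coordHist, List.foldl_append, ← ih]

lemma eventually_mem_arenaAfter_liftStrategy (U : Ultrafilter ι)
    (hadj : ∀ ⦃u w : V⦄, G.Adj u w → ∀ᶠ n in U, (Gs n).Adj (rep u n) (rep w n))
    (σs : ∀ n, SplitterStrategy (Vs n)) (c : ℕ → V) (k : ℕ) :
    ∀ x ∈ arenaAfter G d (splitterHist (liftStrategy U G d σs rep) c k),
      ∀ᶠ n in U,
        rep x n ∈ arenaAfter (Gs n) d (splitterHist (σs n) (fun j => rep (c j) n) k) := by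
  induction k with
  | zero => exact fun _ _ => Eventually.of_forall fun _ => Set.mem_univ _
  | succ k ih =>
    intro x hx
    rw [splitterHist_succ, arenaAfter_append] at hx
    have := eventually_mem_arenaStep U hadj ih hx
    simpa only [splitterHist_succ, arenaAfter_append, coordHist_splitterHist] using this

lemma eventually_consistentPlay_liftStrategy (U : Ultrafilter ι)
    (hadj : ∀ ⦃u w : V⦄, G.Adj u w → ∀ᶠ n in U, (Gs n).Adj (rep u n) (rep w n))
    {σs : ∀ n, SplitterStrategy (Vs n)} {c : ℕ → V} {k : ℕ}
    (hc : ConsistentPlay G d (liftStrategy U G d σs rep) c k) :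
    ∀ᶠ n in U, ConsistentPlay (Gs n) d (σs n) (fun j => rep (c j) n) k :=
  (Set.finite_lt_nat k).eventually_all.mpr fun j hj =>
    eventually_mem_arenaAfter_liftStrategy U hadj σs c j _ (hc j hj)

theorem splitterWinsLimit_liftStrategy (U : Ultrafilter ι)
    (hadj : ∀ ⦃u w : V⦄, G.Adj u w → ∀ᶠ n in U, (Gs n).Adj (rep u n) (rep w n))
    (hinj : Pairwise fun u w => ∀ᶠ n in U, rep u n ≠ rep w n)
    {l m : ℕ} {σs : ∀ n, SplitterStrategy (Vs n)}
    (hσs : ∀ n, SplitterWinsGame (Gs n) l m d (σs n)) :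
    SplitterWinsLimit G d (liftStrategy U G d σs rep) := by
  refine ⟨fun c k hc => ⟨?_, fun y hy => hy.1⟩, fun c => ?_⟩
  · have hT := (eventually_consistentPlay_liftStrategy U hadj hc).mono fun n hn =>
      let h := (hσs n).1 _ k hn; And.intro h.1 h.2.1
    refine (finite_and_ncard_le_of_eventually hinj hT fun y hy => ?_).1
    simpa only [coordHist_splitterHist] using hy.2
  · by_contra! hc
    obtain ⟨n, hn⟩ :=
      (eventually_consistentPlay_liftStrategy U hadj (k := l + 1) fun j _ => hc j).exists
    obtain ⟨k, hkl, hk⟩ := (hσs n).2 fun j => rep (c j) n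
    exact hk (hn k (Nat.lt_succ_of_le hkl))

end Lift

section Ultraproduct

variable {U : Ultrafilter ℕ} {Vs : ℕ → Type} {Gs : ∀ n, SimpleGraph (Vs n)} {d : ℕ}

def UVertex.mk (U : Ultrafilter ℕ) (g : ∀ n, Vs n) : UVertex U Vs :=
  Quotient.mk (prodSetoid U Vs) g

lemma UVertex.mk_out (x : UVertex U Vs) : UVertex.mk U x.out = x :=
  Quotient.out_eq x

lemma UVertex.mk_eq_mk {g h : ∀ n, Vs n} :
    UVertex.mk U g = UVertex.mk U h ↔ ∀ᶠ n in U, g n = h n :=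
  ⟨Quotient.exact, fun h => Quotient.sound h⟩

lemma UVertex.eventually_out_mk (g : ∀ n, Vs n) : ∀ᶠ n in U, (UVertex.mk U g).out n = g n :=
  UVertex.mk_eq_mk.mp (UVertex.mk_out _)

lemma UGraph.adj_mk (g h : ∀ n, Vs n) :
    (UGraph U Gs).Adj (UVertex.mk U g) (UVertex.mk U h) ↔ ∀ᶠ n in U, (Gs n).Adj (g n) (h n) :=
  Iff.rfl

lemma UGraph.exists_walk_of_eventually {A : ∀ n, Set (Vs n)} {B : Set (UVertex U Vs)}
    (hAB : ∀ g, (∀ᶠ n in U, g n ∈ A n) → UVertex.mk U g ∈ B) (r : ℕ)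
    {a b : ∀ n, Vs n} (h : ∀ᶠ n in U, ∃ p : (Gs n).Walk (a n) (b n),
      p.length = r ∧ ∀ y ∈ p.support, y ∈ A n) :
    ∃ p : (UGraph U Gs).Walk (UVertex.mk U a) (UVertex.mk U b),
      p.length = r ∧ ∀ y ∈ p.support, y ∈ B := by
  have ha : UVertex.mk U a ∈ B :=
    hAB a (h.mono fun n ⟨p, _, hpA⟩ => hpA _ p.start_mem_support)
  induction r generalizing a with
  | zero =>
    rw [UVertex.mk_eq_mk.mpr (h.mono fun n ⟨p, hp, _⟩ => p.eq_of_length_eq_zero hp)] at ha ⊢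
    exact ⟨Walk.nil, rfl, by simpa using ha⟩
  | succ r ih =>
    have hnext : ∀ᶠ n in U, ∃ a' : Vs n, (Gs n).Adj (a n) a' ∧
        ∃ p : (Gs n).Walk a' (b n), p.length = r ∧ ∀ y ∈ p.support, y ∈ A n := by
      filter_upwards [h] with n ⟨p, hp, hpA⟩
      obtain ⟨a', hadj, q, rfl⟩ := Walk.not_nil_iff.mp (p.not_nil_iff_lt_length.mpr (by omega))
      exact ⟨a', hadj, q, by simpa using hp, fun y hy => hpA y (by simp [hy])⟩
    have : ∀ n, Nonempty (Vs n) := fun n => ⟨a n⟩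
    obtain ⟨a', ha'⟩ := Filter.skolem.mp hnext
    obtain ⟨p, hp, hpB⟩ := ih (ha'.mono fun n hn => hn.2)
      (hAB a' (ha'.mono fun n ⟨_, p, _, hpA⟩ => hpA _ p.start_mem_support))
    have hadj := (UGraph.adj_mk (Gs := Gs) a a').mpr (ha'.mono fun n hn => hn.1)
    refine ⟨Walk.cons hadj p, by simp [hp], ?_⟩
    simpa [ha] using hpB

lemma UGraph.mk_mem_arenaStep {A : ∀ n, Set (Vs n)} {B : Set (UVertex U Vs)}
    (hAB : ∀ g, (∀ᶠ n in U, g n ∈ A n) → UVertex.mk U g ∈ B)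
    {v : UVertex U Vs} {S : Set (UVertex U Vs)} {g : ∀ n, Vs n}
    (hg : ∀ᶠ n in U, g n ∈ arenaStep (Gs n) d (A n) (v.out n) ((fun q => q.out n) '' S)) :
    UVertex.mk U g ∈ arenaStep (UGraph U Gs) d B v S := by
  refine ⟨hAB g (hg.mono fun n hn => hn.1), fun hgS => ?_, ?_⟩
  · obtain ⟨n, hn, hout⟩ := (hg.and (UVertex.eventually_out_mk g)).exists
    exact hn.2.1 ⟨_, hgS, hout⟩
  · have hwalk : ∀ᶠ n in U, ∃ r ∈ Set.Iic d, ∃ p : (Gs n).Walk (v.out n) (g n),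
        p.length = r ∧ ∀ y ∈ p.support, y ∈ A n :=
      hg.mono fun n ⟨_, _, p, hpd, hpA⟩ => ⟨p.length, hpd, p, rfl, hpA⟩
    obtain ⟨r, hrd, hr⟩ := (Ultrafilter.eventually_exists_mem_iff (Set.finite_Iic d)).mp hwalk
    obtain ⟨p, hp, hpB⟩ := UGraph.exists_walk_of_eventually hAB r hr
    exact ⟨p.copy (UVertex.mk_out v) rfl, by simpa [hp] using hrd, by simpa using hpB⟩

/-- The arena of coordinate `n` of a play on the ultraproduct, its moves read through the
representatives `Quotient.out`. -/
def coordArena (U : Ultrafilter ℕ) (Gs : ∀ n, SimpleGraph (Vs n)) (d n : ℕ)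
    (hist : List (UVertex U Vs × Set (UVertex U Vs))) : Set (Vs n) :=
  hist.foldl (fun A mv => arenaStep (Gs n) d A (mv.1.out n) ((fun q => q.out n) '' mv.2))
    Set.univ

lemma coordArena_append (n : ℕ) (hist : List (UVertex U Vs × Set (UVertex U Vs)))
    (mv : UVertex U Vs × Set (UVertex U Vs)) :
    coordArena U Gs d n (hist ++ [mv]) =
      arenaStep (Gs n) d (coordArena U Gs d n hist) (mv.1.out n) ((fun q => q.out n) '' mv.2) := by
  simp [coordArena, List.foldl_append]

lemma UGraph.mk_mem_arenaAfter (hist : List (UVertex U Vs × Set (UVertex U Vs)))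
    (g : ∀ n, Vs n) (hg : ∀ᶠ n in U, g n ∈ coordArena U Gs d n hist) :
    UVertex.mk U g ∈ arenaAfter (UGraph U Gs) d hist := by
  induction hist using List.reverseRecOn generalizing g with
  | nil => exact Set.mem_univ _
  | append_singleton hist mv ih =>
    rw [arenaAfter_append]
    exact UGraph.mk_mem_arenaStep ih (by simpa only [coordArena_append] using hg)

lemma exists_move_eventually_survives (hU : (U : Filter ℕ) ≤ atTop) [∀ n, Nonempty (Vs n)]
    (hist : List (UVertex U Vs × Set (UVertex U Vs)))
    (hsurv : ∀ᶠ n in U, Survives (Gs n) n d (n - hist.length) (coordArena U Gs d n hist)) :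
    ∃ v ∈ arenaAfter (UGraph U Gs) d hist, ∀ S : Set (UVertex U Vs), S.Finite →
      ∀ᶠ n in U, Survives (Gs n) n d (n - (hist ++ [(v, S)]).length)
        (coordArena U Gs d n (hist ++ [(v, S)])) := by
  have hmove : ∀ᶠ n in U, ∃ v, v ∈ coordArena U Gs d n hist ∧
      ∀ W : Set (Vs n), W.Finite → W.ncard ≤ n →
        Survives (Gs n) n d (n - (hist.length + 1))
          (arenaStep (Gs n) d (coordArena U Gs d n hist) v W) := by
    filter_upwards [hsurv, hU (eventually_gt_atTop hist.length)] with n hn hlen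
    rw [show n - hist.length = n - (hist.length + 1) + 1 by omega] at hn
    exact hn
  obtain ⟨g, hg⟩ := Filter.skolem.mp hmove
  refine ⟨UVertex.mk U g, UGraph.mk_mem_arenaAfter hist g (hg.mono fun n hn => hn.1),
    fun S hS => ?_⟩
  filter_upwards [hg, UVertex.eventually_out_mk g, hU (eventually_ge_atTop S.ncard)]
    with n ⟨_, hn⟩ hout hSn
  rw [coordArena_append, List.length_append, List.length_singleton, hout]
  exact hn _ (hS.image _) ((Set.ncard_image_le hS).trans hSn)

theorem not_splitterWinsLimit_ultraproduct (hU : (U : Filter ℕ) ≤ atTop)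
    (hS : ∀ n, Survives (Gs n) n d n Set.univ) (σ : SplitterStrategy (UVertex U Vs)) :
    ¬ SplitterWinsLimit (UGraph U Gs) d σ :=
  have : ∀ n, Nonempty (Vs n) := fun n => ⟨(hS n).nonempty.some⟩
  not_splitterWinsLimit_of_invariant
    (fun hist => ∀ᶠ n in U, Survives (Gs n) n d (n - hist.length) (coordArena U Gs d n hist))
    (Eventually.of_forall hS) (exists_move_eventually_survives hU) σ

end Ultraproduct

lemma Ultrafilter.le_atTop_of_forall_singleton_notMem {U : Ultrafilter ℕ}
    (hU : ∀ a : ℕ, {a} ∉ U) : (U : Filter ℕ) ≤ atTop := by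
  rcases U.le_cofinite_or_eq_pure with h | ⟨a, rfl⟩
  · exact h.trans Nat.cofinite_eq_atTop.le
  · exact absurd (Ultrafilter.mem_pure.mpr rfl) (hU a)

lemma IsSubgraphOf.refl {V : Type} (G : SimpleGraph V) : IsSubgraphOf G G :=
  ⟨id, Function.injective_id, fun _ _ h => h⟩

theorem limitWinningForSplitter_of_winningForSplitter (U : Ultrafilter ℕ) (C : GraphClass)
    (h : WinningForSplitter C) : LimitWinningForSplitter U C := by
  intro d V G ⟨Vs, Gs, hC, f, hf, hfadj⟩
  obtain ⟨l, m, hlm⟩ := h d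
  choose σs hσs using fun n => hlm _ _ (hC n)
  refine ⟨liftStrategy U G d σs fun x => (f x).out,
    splitterWinsLimit_liftStrategy U ?_ ?_ hσs⟩
  · intro u w huw
    have := hfadj huw
    rwa [← UVertex.mk_out (f u), ← UVertex.mk_out (f w), UGraph.adj_mk] at this
  · intro u w huw
    refine Ultrafilter.eventually_not.mpr fun h => huw (hf ?_)
    rw [← UVertex.mk_out (f u), ← UVertex.mk_out (f w)]
    exact UVertex.mk_eq_mk.mpr h

theorem winningForSplitter_of_limitWinningForSplitter {U : Ultrafilter ℕ}
    (hU : (U : Filter ℕ) ≤ atTop) {C : GraphClass} (h : LimitWinningForSplitter U C) :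
    WinningForSplitter C := by
  intro d
  by_contra! hC
  choose Vs Gs hCn hlose using fun n => hC n n
  obtain ⟨σ, hσ⟩ := h d _ (UGraph U Gs) ⟨Vs, Gs, hCn, IsSubgraphOf.refl _⟩
  exact not_splitterWinsLimit_ultraproduct hU
    (fun n => survives_of_forall_not_splitterWinsGame (hlose n)) σ hσ

theorem game_equiv_general (U : Ultrafilter ℕ) (hU : ∀ a : ℕ, {a} ∉ U)
    (C : GraphClass) :
    WinningForSplitter C ↔ LimitWinningForSplitter U C :=
  ⟨limitWinningForSplitter_of_winningForSplitter U C,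
    winningForSplitter_of_limitWinningForSplitter
      (Ultrafilter.le_atTop_of_forall_singleton_notMem hU)⟩

/-- `C` is winning for splitter iff `C` is limit winning for splitter. -/
theorem game_equiv (U : Ultrafilter ℕ) (hU : ∀ a : ℕ, {a} ∉ U)
    (C : GraphClass) (hfin : FiniteClass C) :
    WinningForSplitter C ↔ LimitWinningForSplitter U C :=
  game_equiv_general U hU C

end NWD
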